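/- arXiv:2204.04957 — 2 statements merged into one kernel-verified Lean document; each statement's English description precedes it below -/
import Mathlib

section
/- Let the equation u = Lf + N_k(u,…,u) be quantitatively well-posed with constants C₁ = c₁⟨T⟩^{α₁} for the linear estimate and C₂ = c₂ T^{α₂}⟨T⟩^{α₃} for the multilinear estimate, where ⟨T⟩ = (1+T²)^{1/2}. Then for initial data of size ε, a guaranteed time of existence is T ∼ min(ε^{−β₁}, ε^{−β₂}) where β₁ = (k−1)/((k−1)α₁ + α₂ + α₃) and β₂ = (k−1)/α₂, in the sense that with this choice of T, the smallness condition T^{α₂}⟨T⟩^{α₃+α₁(k−1)} ε^{k−1} ≲ 1 holds. -/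
/-!
Write `T = min (ε ^ (-c/(a+γ))) (ε ^ (-c/a))` and `⟨T⟩ = (1 + T²)^{1/2}`. Since `⟨T⟩ ≤ √2 · max 1 T`,
the product `T ^ a ⟨T⟩ ^ γ` is at most `2 ^ (γ/2)` times `T ^ a` when `T ≤ 1` and `T ^ (a+γ)` when
`T ≥ 1`. The two exponents of `ε` in the minimum are chosen exactly so that both of these are
bounded by `ε ^ (-c)`, which cancels against the factor `ε ^ c`.
-/

open Real

lemma one_add_sq_rpow_half_le {T γ : ℝ} (hT : 0 ≤ T) (hγ : 0 ≤ γ) :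
    (1 + T ^ 2) ^ (γ / 2) ≤ 2 ^ (γ / 2) * max 1 T ^ γ :=
  calc (1 + T ^ 2) ^ (γ / 2) ≤ (2 * max 1 T ^ 2) ^ (γ / 2) := by
        gcongr
        nlinarith [le_max_left 1 T, le_max_right 1 T]
    _ = 2 ^ (γ / 2) * max 1 T ^ γ := by
        rw [mul_rpow zero_le_two (by positivity), ← rpow_natCast, ← rpow_mul (by positivity)]
        ring_nf

lemma rpow_le_rpow_neg_of_le_rpow_neg_div {T ε a c : ℝ} (hT : 0 ≤ T) (hε : 0 < ε) (ha : 0 < a)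
    (h : T ≤ ε ^ (-(c / a))) : T ^ a ≤ ε ^ (-c) :=
  calc T ^ a ≤ (ε ^ (-(c / a))) ^ a := rpow_le_rpow hT h ha.le
    _ = ε ^ (-c) := by rw [← rpow_mul hε.le, neg_mul, div_mul_cancel₀ c ha.ne']

theorem existence_time_smallness {ε a γ c : ℝ} (hε : 0 < ε) (ha : 0 < a) (hγ : 0 ≤ γ) :
    (min (ε ^ (-(c / (a + γ)))) (ε ^ (-(c / a)))) ^ a *
        (1 + (min (ε ^ (-(c / (a + γ)))) (ε ^ (-(c / a)))) ^ 2) ^ (γ / 2) * ε ^ c ≤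
      2 ^ (γ / 2) := by
  set T := min (ε ^ (-(c / (a + γ)))) (ε ^ (-(c / a)))
  have hT : 0 ≤ T := le_min (by positivity) (by positivity)
  have hbound : T ^ a * max 1 T ^ γ ≤ ε ^ (-c) := by
    rcases le_total T 1 with hT1 | hT1
    · rw [max_eq_left hT1, one_rpow, mul_one]
      exact rpow_le_rpow_neg_of_le_rpow_neg_div hT hε ha (min_le_right _ _)
    · rw [max_eq_right hT1, ← rpow_add (by linarith)]
      exact rpow_le_rpow_neg_of_le_rpow_neg_div hT hε (by positivity) (min_le_left _ _)
  calc T ^ a * (1 + T ^ 2) ^ (γ / 2) * ε ^ c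
      ≤ T ^ a * (2 ^ (γ / 2) * max 1 T ^ γ) * ε ^ c := by
        gcongr
        exact one_add_sq_rpow_half_le hT hγ
    _ = 2 ^ (γ / 2) * (T ^ a * max 1 T ^ γ) * ε ^ c := by ring
    _ ≤ 2 ^ (γ / 2) * ε ^ (-c) * ε ^ c := by gcongr
    _ = 2 ^ (γ / 2) := by rw [mul_assoc, ← rpow_add hε, neg_add_cancel, rpow_zero, mul_one]

/-- Guaranteed time of existence: with constants `C₁ = c₁⟨T⟩^{α₁}`,
`C₂ = c₂ T^{α₂}⟨T⟩^{α₃}`, the choice `T = min(ε^{-β₁}, ε^{-β₂})` with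
`β₁ = (k-1)/((k-1)α₁+α₂+α₃)`, `β₂ = (k-1)/α₂` makes the smallness condition
`T^{α₂}⟨T⟩^{α₃+α₁(k-1)} ε^{k-1} ≲ 1` hold, where `⟨T⟩ = (1+T²)^{1/2}`. -/
theorem stmt_8 (k : ℕ) (hk : 2 ≤ k) (α₁ α₂ α₃ : ℝ)
    (hα₁ : 0 < α₁) (hα₂ : 0 < α₂) (hα₃ : 0 < α₃) :
    ∃ C > 0, ∀ ε : ℝ, 0 < ε →
      (min (ε ^ (-((k - 1 : ℝ) / ((k - 1 : ℝ) * α₁ + α₂ + α₃))))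
           (ε ^ (-((k - 1 : ℝ) / α₂)))) ^ α₂ *
        (1 + (min (ε ^ (-((k - 1 : ℝ) / ((k - 1 : ℝ) * α₁ + α₂ + α₃))))
                  (ε ^ (-((k - 1 : ℝ) / α₂)))) ^ (2 : ℕ)) ^ ((α₃ + α₁ * (k - 1 : ℝ)) / 2) *
        ε ^ ((k : ℝ) - 1) ≤ C := by
  have hk₁ : (0 : ℝ) ≤ k - 1 := by
    have : (2 : ℝ) ≤ k := by exact_mod_cast hk
    linarith
  have hγ : 0 ≤ α₃ + α₁ * (k - 1 : ℝ) := add_nonneg hα₃.le (mul_nonneg hα₁.le hk₁)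
  refine ⟨2 ^ ((α₃ + α₁ * (k - 1 : ℝ)) / 2), by positivity, fun ε hε => ?_⟩
  rw [show (k - 1 : ℝ) * α₁ + α₂ + α₃ = α₂ + (α₃ + α₁ * (k - 1)) by ring]
  exact existence_time_smallness hε hα₂ hγ
end

section
/- Let f₁, f₂, f₃ ∈ L²(ℝ) with f̂_i = χ_{[N, N+α]} for i = 1,2,3, where N ≥ 1 and 0 < α ≤ 1. Then the function g with ĝ(ξ) = ∫_{ξ₁−ξ₂+ξ₃=ξ} f̂₁(ξ₁)f̂₂(ξ₂)f̂₃(ξ₃) dξ₁dξ₃ is supported in [N−α, N+2α], and ĝ(N) ≥ c α² for an absolute constant c > 0. -/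
/-!
The integrand is the indicator of the set of `(ξ₁, ξ₃) ∈ I²` with `ξ₁ + ξ₃ - ξ ∈ I`, `I = [N, N + α]`,
so `ĝ(ξ)` is its area. Since `ξ = ξ₁ + ξ₃ - ξ₂` with all three `ξᵢ ∈ I`, this set is empty unless
`ξ ∈ [N - α, N + 2α]`; for `ξ = N` it contains the square `[N, N + α/2]²`, whence `ĝ(N) ≥ α²/4`.
-/

open MeasureTheory

def resonantSet (I : Set ℝ) (ξ : ℝ) : Set (ℝ × ℝ) :=
  {p | p.1 ∈ I ∧ p.1 + p.2 - ξ ∈ I ∧ p.2 ∈ I}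

lemma measurableSet_resonantSet {I : Set ℝ} (hI : MeasurableSet I) (ξ : ℝ) :
    MeasurableSet (resonantSet I ξ) :=
  (measurable_fst hI).inter
    ((((measurable_fst.add measurable_snd).sub_const ξ) hI).inter (measurable_snd hI))

lemma indicator_mul_indicator_mul_indicator_eq_indicator_resonantSet
    (I : Set ℝ) (ξ : ℝ) (p : ℝ × ℝ) :
    I.indicator (fun _ => (1 : ℝ)) p.1 * I.indicator (fun _ => (1 : ℝ)) (p.1 + p.2 - ξ) *
      I.indicator (fun _ => (1 : ℝ)) p.2 = (resonantSet I ξ).indicator 1 p := by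
  unfold Set.indicator resonantSet
  split_ifs <;> simp_all

lemma integral_indicator_resonant_eq_measureReal {I : Set ℝ} (hI : MeasurableSet I) (ξ : ℝ) :
    ∫ p : ℝ × ℝ, I.indicator (fun _ => (1 : ℝ)) p.1 *
        I.indicator (fun _ => (1 : ℝ)) (p.1 + p.2 - ξ) * I.indicator (fun _ => (1 : ℝ)) p.2 =
      volume.real (resonantSet I ξ) := by
  simp only [indicator_mul_indicator_mul_indicator_eq_indicator_resonantSet]
  exact integral_indicator_one (measurableSet_resonantSet hI ξ)

lemma resonantSet_Icc_eq_empty {a b ξ : ℝ} (hξ : ξ ∉ Set.Icc (2 * a - b) (2 * b - a)) :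
    resonantSet (Set.Icc a b) ξ = ∅ := by
  refine Set.eq_empty_of_forall_notMem fun p ⟨⟨h₁, h₁'⟩, ⟨h₂, h₂'⟩, ⟨h₃, h₃'⟩⟩ => hξ ?_
  constructor <;> linarith

lemma Icc_prod_Icc_subset_resonantSet (a b : ℝ) :
    Set.Icc a ((a + b) / 2) ×ˢ Set.Icc a ((a + b) / 2) ⊆ resonantSet (Set.Icc a b) a := by
  rintro p ⟨⟨h₁, h₁'⟩, ⟨h₃, h₃'⟩⟩
  refine ⟨⟨h₁, ?_⟩, ⟨?_, ?_⟩, ⟨h₃, ?_⟩⟩ <;> linarith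

lemma resonantSet_subset_prod (I : Set ℝ) (ξ : ℝ) : resonantSet I ξ ⊆ I ×ˢ I :=
  fun _ hp => ⟨hp.1, hp.2.2⟩

lemma sq_div_four_le_measureReal_resonantSet_Icc {a b : ℝ} (hab : a ≤ b) :
    (b - a) ^ 2 / 4 ≤ volume.real (resonantSet (Set.Icc a b) a) := by
  have hbox_finite : volume (Set.Icc a b ×ˢ Set.Icc a b) ≠ ⊤ :=
    ((isCompact_Icc.prod isCompact_Icc).measure_lt_top).ne
  calc (b - a) ^ 2 / 4
      = volume.real (Set.Icc a ((a + b) / 2) ×ˢ Set.Icc a ((a + b) / 2)) := by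
        rw [Measure.volume_eq_prod, measureReal_prod_prod, Real.volume_real_Icc,
          max_eq_left (by linarith)]
        ring
    _ ≤ volume.real (resonantSet (Set.Icc a b) a) :=
        measureReal_mono (Icc_prod_Icc_subset_resonantSet a b)
          (measure_ne_top_of_subset (resonantSet_subset_prod _ _) hbox_finite)

/-- Lower bound on the trilinear resonant interaction of a frequency-localized bump:
with `f̂ᵢ = χ_{[N,N+α]}`, the convolution-type integral
`ĝ(ξ) = ∫∫ χ(ξ₁)χ(ξ₁+ξ₃-ξ)χ(ξ₃) dξ₁dξ₃` is supported in `[N-α, N+2α]`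
and satisfies `ĝ(N) ≥ cα²` for an absolute constant `c > 0`. -/
theorem stmt_19 :
    ∃ c > (0 : ℝ), ∀ N α : ℝ, 1 ≤ N → 0 < α → α ≤ 1 →
      (∀ ξ : ℝ, ξ ∉ Set.Icc (N - α) (N + 2 * α) →
        (∫ p : ℝ × ℝ, Set.indicator (Set.Icc N (N + α)) (fun _ => (1 : ℝ)) p.1 *
            Set.indicator (Set.Icc N (N + α)) (fun _ => (1 : ℝ)) (p.1 + p.2 - ξ) *
            Set.indicator (Set.Icc N (N + α)) (fun _ => (1 : ℝ)) p.2) = 0) ∧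
      (∫ p : ℝ × ℝ, Set.indicator (Set.Icc N (N + α)) (fun _ => (1 : ℝ)) p.1 *
          Set.indicator (Set.Icc N (N + α)) (fun _ => (1 : ℝ)) (p.1 + p.2 - N) *
          Set.indicator (Set.Icc N (N + α)) (fun _ => (1 : ℝ)) p.2) ≥ c * α ^ 2 := by
  refine ⟨1 / 4, by norm_num, fun N α _ hα _ => ⟨fun ξ hξ => ?_, ?_⟩⟩
  · have hξ' : ξ ∉ Set.Icc (2 * N - (N + α)) (2 * (N + α) - N) := by
      rwa [show 2 * N - (N + α) = N - α by ring, show 2 * (N + α) - N = N + 2 * α by ring]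
    rw [integral_indicator_resonant_eq_measureReal measurableSet_Icc,
      resonantSet_Icc_eq_empty hξ', measureReal_empty]
  · rw [integral_indicator_resonant_eq_measureReal measurableSet_Icc]
    have hbound := sq_div_four_le_measureReal_resonantSet_Icc (a := N) (le_add_of_nonneg_right hα.le)
    rw [add_sub_cancel_left] at hbound
    linarith
end
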